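/- arXiv:1906.00788 — 3 statements merged into one kernel-verified Lean document; each statement's English description precedes it below -/
import Mathlib

section
/- For all integers n, w_n = b*u_n + (c - b*r)*u_{n-1} + a*t*u_{n-2}. -/
/-!
Both sides of the identity solve the recurrence: the right-hand side is a linear combination of
shifts of `u`. Since `t ≠ 0`, a solution on `ℤ` is determined by three consecutive values, and
running the recurrence for `u` backwards gives `u (-1) = 0` and `t * u (-2) = 1`, from which the
two sides agree at `0`, `1` and `2`.
-/

section Recurrence

variable {R : Type*} [CommRing R] {r s t : R} {f g : ℤ → R}

def IsThirdOrderRec (r s t : R) (f : ℤ → R) : Prop :=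
  ∀ n, f n = r * f (n - 1) + s * f (n - 2) + t * f (n - 3)

namespace IsThirdOrderRec

theorem apply_add_three (hf : IsThirdOrderRec r s t f) (n : ℤ) :
    f (n + 3) = r * f (n + 2) + s * f (n + 1) + t * f n := by
  have h := hf (n + 3)
  rwa [show n + 3 - 1 = n + 2 by ring, show n + 3 - 2 = n + 1 by ring,
    show n + 3 - 3 = n by ring] at h

theorem add (hf : IsThirdOrderRec r s t f) (hg : IsThirdOrderRec r s t g) :
    IsThirdOrderRec r s t (fun n => f n + g n) := fun n => by
  beta_reduce; linear_combination hf n + hg n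

theorem sub (hf : IsThirdOrderRec r s t f) (hg : IsThirdOrderRec r s t g) :
    IsThirdOrderRec r s t (fun n => f n - g n) := fun n => by
  beta_reduce; linear_combination hf n - hg n

theorem const_mul (hf : IsThirdOrderRec r s t f) (k : R) : IsThirdOrderRec r s t (fun n => k * f n) := fun n => by
  beta_reduce; linear_combination k * hf n

theorem comp_sub (hf : IsThirdOrderRec r s t f) (k : ℤ) : IsThirdOrderRec r s t (fun n => f (n - k)) := fun n => by
  simp only [hf (n - k), sub_right_comm _ k]

theorem eq_zero_of_zero_one_two [NoZeroDivisors R] (hf : IsThirdOrderRec r s t f) (ht : t ≠ 0)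
    (h0 : f 0 = 0) (h1 : f 1 = 0) (h2 : f 2 = 0) (n : ℤ) : f n = 0 := by
  suffices h : ∀ m : ℤ, f m = 0 ∧ f (m + 1) = 0 ∧ f (m + 2) = 0 from (h n).1
  intro m
  induction m using Int.induction_on with
  | zero => simpa using ⟨h0, h1, h2⟩
  | succ k ih =>
    obtain ⟨hk, hk1, hk2⟩ := ih
    refine ⟨hk1, hk2, ?_⟩
    rw [add_assoc, show (1 + 2 : ℤ) = 3 by norm_num, hf.apply_add_three, hk, hk1, hk2]
    ring
  | pred k ih =>
    obtain ⟨hk, hk1, hk2⟩ := ih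
    have h := hf.apply_add_three (-k - 1)
    rw [show -(k : ℤ) - 1 + 3 = -k + 2 by ring, show -(k : ℤ) - 1 + 2 = -k + 1 by ring,
      show -(k : ℤ) - 1 + 1 = -k by ring, hk, hk1, hk2] at h
    refine ⟨(mul_eq_zero.mp (by linear_combination -h)).resolve_left ht, ?_, ?_⟩
    · rwa [show -(k : ℤ) - 1 + 1 = -k by ring]
    · rwa [show -(k : ℤ) - 1 + 2 = -k + 1 by ring]

theorem ext [NoZeroDivisors R] (hf : IsThirdOrderRec r s t f) (hg : IsThirdOrderRec r s t g) (ht : t ≠ 0)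
    (h0 : f 0 = g 0) (h1 : f 1 = g 1) (h2 : f 2 = g 2) (n : ℤ) : f n = g n :=
  sub_eq_zero.mp <| (hf.sub hg).eq_zero_of_zero_one_two ht (sub_eq_zero.mpr h0) (sub_eq_zero.mpr h1)
    (sub_eq_zero.mpr h2) n

end IsThirdOrderRec

end Recurrence

theorem stmt_3 (r s t a b c : ℂ) (ht : t ≠ 0)
    (w u : ℤ → ℂ)
    (hw : ∀ n : ℤ, w n = r * w (n-1) + s * w (n-2) + t * w (n-3))
    (hw0 : w 0 = a) (hw1 : w 1 = b) (hw2 : w 2 = c)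
    (hu : ∀ n : ℤ, u n = r * u (n-1) + s * u (n-2) + t * u (n-3))
    (hu0 : u 0 = 0) (hu1 : u 1 = 1) (hu2 : u 2 = r) :
    ∀ n : ℤ, w n = b * u n + (c - b * r) * u (n-1) + a * t * u (n-2) := by
  have hw : IsThirdOrderRec r s t w := hw
  have hu : IsThirdOrderRec r s t u := hu
  have hu_neg_one : u (-1) = 0 := by
    have h := hu.apply_add_three (-1)
    norm_num [hu0, hu1, hu2] at h
    exact h.resolve_left ht
  have hu_neg_two : t * u (-2) = 1 := by
    have h := hu.apply_add_three (-2)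
    norm_num [hu0, hu1, hu_neg_one] at h
    exact h.symm
  have hv : IsThirdOrderRec r s t (fun n => b * u n + (c - b * r) * u (n - 1) + a * t * u (n - 2)) :=
    ((hu.const_mul b).add ((hu.comp_sub 1).const_mul _)).add ((hu.comp_sub 2).const_mul _)
  refine hw.ext hv ht ?_ ?_ ?_
  · norm_num [hw0, hu0, hu_neg_one]
    linear_combination -a * hu_neg_two
  · norm_num [hw1, hu1, hu0, hu_neg_one]
  · norm_num [hw2, hu2, hu1, hu0]
end

section
/- For all integers n, 2 v_{3n} = 6 t^n - v_n^3 + 3 u_n v_n v_{n+1} + 3 (u_{n+1} - r u_n) v_n^2 + 3 t u_{n-1} v_{n-1} v_n. -/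
/-!
Factor `X³ - r X² - s X - t = (X - a)(X - b)(X - c)`. Then `v n = aⁿ + bⁿ + cⁿ` and
`tⁿ = aⁿ bⁿ cⁿ`, so Newton's identity for the power sums of `aⁿ, bⁿ, cⁿ` gives
`2 v (3n) = 6 tⁿ - (v n)³ + 3 v n · v (2n)`. Finally `v (2n)` is expanded by the addition
formula `v (n + m) = u n v (m+1) + (u (n+1) - r u n) v m + t u (n-1) v (m-1)`, which holds
because both sides solve the recurrence in `n` and agree for `n = 0, 1, 2`.
-/

variable {K : Type*} [Field K]

def linRecSpace (r s t : K) : Submodule K (ℤ → K) where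
  carrier := {f | ∀ n, f n = r * f (n - 1) + s * f (n - 2) + t * f (n - 3)}
  add_mem' {f g} hf hg n := by
    simp only [Pi.add_apply, hf n, hg n]; ring
  zero_mem' n := by simp
  smul_mem' c f hf n := by
    simp only [Pi.smul_apply, smul_eq_mul, hf n]; ring

namespace linRecSpace

variable {r s t : K} {f g : ℤ → K}

theorem apply_add_three (hf : f ∈ linRecSpace r s t) (n : ℤ) :
    f (n + 3) = r * f (n + 2) + s * f (n + 1) + t * f n := by
  have h := hf (n + 3)
  rwa [show n + 3 - 1 = n + 2 by ring, show n + 3 - 2 = n + 1 by ring,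
    show n + 3 - 3 = n by ring] at h

theorem shift_mem (hf : f ∈ linRecSpace r s t) (k : ℤ) :
    (fun n => f (n + k)) ∈ linRecSpace r s t := by
  intro n
  have h := hf (n + k)
  rwa [show n + k - 1 = n - 1 + k by ring, show n + k - 2 = n - 2 + k by ring,
    show n + k - 3 = n - 3 + k by ring] at h

theorem eq_zero_of_initial_eq_zero (ht : t ≠ 0) (hf : f ∈ linRecSpace r s t)
    (h0 : f 0 = 0) (h1 : f 1 = 0) (h2 : f 2 = 0) : f = 0 := by
  suffices h : ∀ n : ℤ, f n = 0 ∧ f (n + 1) = 0 ∧ f (n + 2) = 0 from funext fun n => (h n).1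
  intro n
  induction n using Int.induction_on with
  | zero => simpa using ⟨h0, h1, h2⟩
  | succ k ih =>
    obtain ⟨a, b, c⟩ := ih
    refine ⟨b, by rwa [add_assoc], ?_⟩
    rw [add_assoc, show (1 : ℤ) + 2 = 3 by rfl, apply_add_three hf, a, b, c]
    ring
  | pred k ih =>
    obtain ⟨a, b, c⟩ := ih
    refine ⟨?_, by rwa [sub_add_cancel], by rwa [show -(k : ℤ) - 1 + 2 = -k + 1 by ring]⟩
    have h := hf (-k + 2)
    rw [show -(k : ℤ) + 2 - 1 = -k + 1 by ring, show -(k : ℤ) + 2 - 2 = -k by ring,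
      show -(k : ℤ) + 2 - 3 = -k - 1 by ring, a, b, c] at h
    simpa [ht] using h.symm

theorem eq_of_initial_eq (ht : t ≠ 0) (hf : f ∈ linRecSpace r s t)
    (hg : g ∈ linRecSpace r s t)
    (h0 : f 0 = g 0) (h1 : f 1 = g 1) (h2 : f 2 = g 2) : f = g :=
  sub_eq_zero.mp <| eq_zero_of_initial_eq_zero ht (sub_mem hf hg)
    (sub_eq_zero.mpr h0) (sub_eq_zero.mpr h1) (sub_eq_zero.mpr h2)

theorem zpow_mem {x : K} (hx : x ≠ 0) (h : x ^ 3 = r * x ^ 2 + s * x + t) :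
    (fun n : ℤ => x ^ n) ∈ linRecSpace r s t := by
  intro n
  show x ^ n = r * x ^ (n - 1) + s * x ^ (n - 2) + t * x ^ (n - 3)
  have hn : x ^ n = x ^ (n - 3) * x ^ 3 := by rw [← zpow_natCast, ← zpow_add₀ hx]; norm_num
  have hn1 : x ^ (n - 1) = x ^ (n - 3) * x ^ 2 := by
    rw [← zpow_natCast, ← zpow_add₀ hx]; ring_nf
  have hn2 : x ^ (n - 2) = x ^ (n - 3) * x := by rw [← zpow_add_one₀ hx]; ring_nf
  rw [hn, hn1, hn2, h]
  ring

theorem apply_add (ht : t ≠ 0) {u v : ℤ → K} (hu : u ∈ linRecSpace r s t)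
    (hu0 : u 0 = 0) (hu1 : u 1 = 1) (hu2 : u 2 = r) (hv : v ∈ linRecSpace r s t) (m n : ℤ) :
    v (n + m) = u n * v (m + 1) + (u (n + 1) - r * u n) * v m + t * u (n - 1) * v (m - 1) := by
  have hum1 : u (-1) = 0 := by
    have h := hu 2
    norm_num [hu0, hu1, hu2] at h
    simpa [ht] using h
  have hu3 : u 3 = r ^ 2 + s := by
    have h := apply_add_three hu 0
    norm_num [hu0, hu1, hu2] at h
    rw [h]; ring
  have hmem : (fun n => u n * v (m + 1) + (u (n + 1) - r * u n) * v m
      + t * u (n - 1) * v (m - 1)) ∈ linRecSpace r s t := by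
    have := add_mem (add_mem (Submodule.smul_mem _ (v (m + 1)) hu)
      (Submodule.smul_mem _ (v m) (sub_mem (shift_mem hu 1) (Submodule.smul_mem _ r hu))))
      (Submodule.smul_mem _ (t * v (m - 1)) (shift_mem hu (-1)))
    convert this using 1
    funext n
    simp only [Pi.add_apply, Pi.smul_apply, Pi.sub_apply, smul_eq_mul]
    ring_nf
  refine congrFun (eq_of_initial_eq ht (shift_mem hv m) hmem ?_ ?_ ?_) n
  · norm_num [hu0, hu1, hum1]
  · norm_num [hu0, hu1, hu2, add_comm]
  · have h := hv (m + 2)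
    rw [show m + 2 - 1 = m + 1 by ring, show m + 2 - 2 = m by ring,
      show m + 2 - 3 = m - 1 by ring] at h
    simp only [add_comm 2 m, h, show (2 : ℤ) + 1 = 3 by rfl, show (2 : ℤ) - 1 = 1 by rfl,
      hu1, hu2, hu3]
    ring

theorem eq_zpow_add_zpow_add_zpow {a b c : K} (hr : a + b + c = r)
    (hs : a * b + a * c + b * c = -s) (ht : a * b * c = t) (ht0 : t ≠ 0) {v : ℤ → K}
    (hv : v ∈ linRecSpace r s t) (hv0 : v 0 = 3) (hv1 : v 1 = r) (hv2 : v 2 = r ^ 2 + 2 * s)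
    (n : ℤ) : v n = a ^ n + b ^ n + c ^ n := by
  obtain ⟨ha, hb, hc⟩ : a ≠ 0 ∧ b ≠ 0 ∧ c ≠ 0 := by
    simpa [← ht, not_or, and_assoc] using ht0
  have hroot {x : K} (hx : x = a ∨ x = b ∨ x = c) : x ^ 3 = r * x ^ 2 + s * x + t := by
    rcases hx with rfl | rfl | rfl <;> linear_combination x ^ 2 * hr - x * hs + ht
  have hsum := add_mem (add_mem (zpow_mem ha (hroot (.inl rfl)))
    (zpow_mem hb (hroot (.inr (.inl rfl))))) (zpow_mem hc (hroot (.inr (.inr rfl))))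
  refine congrFun (eq_of_initial_eq ht0 hv hsum ?_ ?_ ?_) n
  · norm_num [hv0]
  · simp [hv1, hr]
  · simp only [hv2, Pi.add_apply]
    norm_cast
    linear_combination 2 * hs - (a + b + c + r) * hr

end linRecSpace

theorem exists_vieta_cubic [IsAlgClosed K] (r s t : K) :
    ∃ a b c : K, a + b + c = r ∧ a * b + a * c + b * c = -s ∧ a * b * c = t := by
  let P : Cubic K := ⟨1, -r, -s, -t⟩
  have ha : P.a ≠ 0 := one_ne_zero
  obtain ⟨a, b, c, h3⟩ := (Cubic.splits_iff_roots_eq_three (φ := RingHom.id K) ha).mp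
    (IsAlgClosed.splits _)
  refine ⟨a, b, c, ?_, ?_, ?_⟩
  · linear_combination (by simpa [P] using Cubic.b_eq_three_roots ha h3 : -r = -c + (-b + -a))
  · simpa [P] using (Cubic.c_eq_three_roots ha h3).symm
  · simpa [P] using (Cubic.d_eq_three_roots ha h3).symm

theorem stmt_10 (r s t : ℂ) (ht : t ≠ 0)
    (u v : ℤ → ℂ)
    (hu : ∀ n : ℤ, u n = r * u (n-1) + s * u (n-2) + t * u (n-3))
    (hu0 : u 0 = 0) (hu1 : u 1 = 1) (hu2 : u 2 = r)
    (hv : ∀ n : ℤ, v n = r * v (n-1) + s * v (n-2) + t * v (n-3))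
    (hv0 : v 0 = 3) (hv1 : v 1 = r) (hv2 : v 2 = r ^ 2 + 2 * s) :
    ∀ n : ℤ, 2 * v (3 * n) =
      6 * t ^ n - v n ^ 3 + 3 * u n * v n * v (n+1)
      + 3 * (u (n+1) - r * u n) * v n ^ 2 + 3 * t * u (n-1) * v (n-1) * v n := by
  intro n
  obtain ⟨a, b, c, hr, hs, hrt⟩ := exists_vieta_cubic r s t
  have hv_eq := linRecSpace.eq_zpow_add_zpow_add_zpow hr hs hrt ht hv hv0 hv1 hv2
  have newton : 2 * v (3 * n) = 6 * t ^ n - v n ^ 3 + 3 * v n * v (n + n) := by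
    simp only [hv_eq, ← hrt, mul_zpow, ← two_mul, mul_comm (2 : ℤ), mul_comm (3 : ℤ),
      zpow_mul]
    norm_cast
    ring
  rw [newton, linRecSpace.apply_add ht hu hu0 hu1 hu2 hv n n]
  ring
end

section
/- For all integers n, w_{-n} = (2 w_{2n} - 2 v_n w_n + a (v_n^2 - v_{2n})) / (2 t^n). -/
/-!
Let `C` be the companion matrix of `X³ - rX² - sX - t`, invertible because `det C = t`. Every
solution of the recurrence is a fixed linear functional of `Cⁿ`: `wₙ = (Cⁿ (a, b, c))₀` and
`vₙ = tr Cⁿ`. Cayley–Hamilton for the `3 × 3` matrix `A = Cⁿ`, multiplied by `A⁻¹ = C⁻ⁿ`, reads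
`2A² - 2 tr A · A + ((tr A)² - tr A²) · 1 = 2 det A · A⁻¹`; evaluating it on `(a, b, c)` gives
the formula, since `det A = tⁿ`.
-/

open Matrix

section

variable {K : Type*} [Field K]

def IsLinearRec3 (r s t : K) (x : ℤ → K) : Prop :=
  ∀ n, x n = r * x (n - 1) + s * x (n - 2) + t * x (n - 3)

namespace IsLinearRec3

variable {r s t : K} {x y : ℤ → K}

theorem add_three (hx : IsLinearRec3 r s t x) (n : ℤ) :
    x (n + 3) = r * x (n + 2) + s * x (n + 1) + t * x n := by
  simpa [add_sub_assoc] using hx (n + 3)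

theorem sub (hx : IsLinearRec3 r s t x) (hy : IsLinearRec3 r s t y) :
    IsLinearRec3 r s t (x - y) := fun n => by
  simp only [Pi.sub_apply]
  rw [hx n, hy n]
  ring

theorem eq_zero_of_init (hx : IsLinearRec3 r s t x) (ht : t ≠ 0) (h0 : x 0 = 0) (h1 : x 1 = 0)
    (h2 : x 2 = 0) : x = 0 := by
  let P (m : ℤ) : Prop := x m = 0 ∧ x (m + 1) = 0 ∧ x (m + 2) = 0
  have up (m : ℤ) : P m → P (m + 1) := fun ⟨e0, e1, e2⟩ =>
    ⟨e1, by rwa [add_assoc, one_add_one_eq_two], by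
      rw [add_assoc, show (1 : ℤ) + 2 = 3 by norm_num, hx.add_three, e0, e1, e2]; ring⟩
  have down (m : ℤ) : P m → P (m - 1) := fun ⟨e0, e1, e2⟩ => by
    have step := hx.add_three (m - 1)
    rw [show m - 1 + 3 = m + 2 by ring, show m - 1 + 2 = m + 1 by ring, sub_add_cancel,
      e0, e1, e2] at step
    refine ⟨?_, by rwa [sub_add_cancel], by rwa [show m - 1 + 2 = m + 1 by ring]⟩
    simpa [ht] using step.symm
  have hP (n : ℤ) : P n := by
    induction n using Int.induction_on with
    | zero => exact ⟨h0, by simpa using h1, by simpa using h2⟩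
    | succ k ih => exact up _ ih
    | pred k ih => exact down _ ih
  funext n
  exact (hP n).1

theorem eq_of_init (hx : IsLinearRec3 r s t x) (hy : IsLinearRec3 r s t y) (ht : t ≠ 0)
    (h0 : x 0 = y 0) (h1 : x 1 = y 1) (h2 : x 2 = y 2) : x = y :=
  sub_eq_zero.mp <| (hx.sub hy).eq_zero_of_init ht (sub_eq_zero.mpr h0) (sub_eq_zero.mpr h1)
    (sub_eq_zero.mpr h2)

end IsLinearRec3

namespace Matrix

variable {n : Type*} [Fintype n] [DecidableEq n]

theorem det_zpow (A : Matrix n n K) (k : ℤ) : (A ^ k).det = A.det ^ k := by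
  cases k with
  | ofNat m => simp [det_pow]
  | negSucc m => rw [zpow_negSucc, det_nonsing_inv, det_pow, Ring.inverse_eq_inv', zpow_negSucc]

theorem cayley_hamilton_fin_three {R : Type*} [CommRing R] (A : Matrix (Fin 3) (Fin 3) R) :
    (2 : R) • A ^ 3 =
      (2 * trace A) • A ^ 2 - (trace A ^ 2 - trace (A ^ 2)) • A + (2 * det A) • 1 := by
  rw [pow_succ, sq, eta_fin_three A]
  ext i j
  fin_cases i <;> fin_cases j <;> simp [trace_fin_three, det_fin_three] <;> ring

theorem cayley_hamilton_fin_three_mul_inv (A : Matrix (Fin 3) (Fin 3) K) (hA : IsUnit A.det) :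
    (2 : K) • A ^ 2 =
      (2 * trace A) • A - (trace A ^ 2 - trace (A ^ 2)) • 1 + (2 * det A) • A⁻¹ := by
  simpa only [sub_mul, add_mul, smul_mul_assoc, one_mul, pow_succ, mul_assoc,
    mul_nonsing_inv _ hA, mul_one, pow_zero] using
    congrArg (· * A⁻¹) (cayley_hamilton_fin_three A)

variable {r s t : K} {A : Matrix n n K}

theorem zpow_eq_of_pow_three (hA : IsUnit A.det) (h : A ^ 3 = r • A ^ 2 + s • A + t • 1)
    (k : ℤ) : A ^ k = r • A ^ (k - 1) + s • A ^ (k - 2) + t • A ^ (k - 3) := by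
  have shift (j : ℕ) : A ^ (k - 3) * A ^ j = A ^ (k - 3 + j) := by rw [zpow_add hA, zpow_natCast]
  calc A ^ k = A ^ (k - 3) * A ^ 3 := by rw [shift]; ring_nf
    _ = r • (A ^ (k - 3) * A ^ 2) + s • (A ^ (k - 3) * A ^ 1) + t • (A ^ (k - 3) * A ^ 0) := by
      rw [h, pow_one, pow_zero]
      simp only [Matrix.mul_add, Matrix.mul_smul, mul_one]
    _ = _ := by simp only [shift]; ring_nf

theorem isLinearRec3_zpow_mulVec_apply (hA : IsUnit A.det)
    (h : A ^ 3 = r • A ^ 2 + s • A + t • 1) (u : n → K) (i : n) :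
    IsLinearRec3 r s t (fun k => (A ^ k *ᵥ u) i) := fun k => by
  simp [zpow_eq_of_pow_three hA h k, add_mulVec, smul_mulVec]

theorem isLinearRec3_trace_zpow (hA : IsUnit A.det) (h : A ^ 3 = r • A ^ 2 + s • A + t • 1) :
    IsLinearRec3 r s t (fun k => trace (A ^ k)) := fun k => by
  simp [zpow_eq_of_pow_three hA h k]

end Matrix

def companion3 (r s t : K) : Matrix (Fin 3) (Fin 3) K := !![0, 1, 0; 0, 0, 1; t, s, r]

variable {r s t : K}

theorem det_companion3 : (companion3 r s t).det = t := by
  simp [companion3, det_fin_three]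

theorem companion3_pow_three :
    companion3 r s t ^ 3 = r • companion3 r s t ^ 2 + s • companion3 r s t + t • 1 := by
  rw [pow_succ, sq]
  ext i j
  fin_cases i <;> fin_cases j <;> simp [companion3, mul_apply, Fin.sum_univ_three, one_apply] <;>
    ring

theorem companion3_mulVec (a b c : K) :
    companion3 r s t *ᵥ ![a, b, c] = ![b, c, t * a + s * b + r * c] := by
  ext i
  fin_cases i <;> simp [companion3, mulVec, dotProduct, Fin.sum_univ_three]

theorem trace_companion3 : trace (companion3 r s t) = r := by
  simp [companion3, trace_fin_three]

theorem trace_companion3_sq : trace (companion3 r s t ^ 2) = r ^ 2 + 2 * s := by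
  simp [companion3, trace_fin_three, sq]
  ring

end

theorem stmt_15 (r s t a b c : ℂ) (ht : t ≠ 0)
    (w v : ℤ → ℂ)
    (hw : ∀ n : ℤ, w n = r * w (n-1) + s * w (n-2) + t * w (n-3))
    (hw0 : w 0 = a) (hw1 : w 1 = b) (hw2 : w 2 = c)
    (hv : ∀ n : ℤ, v n = r * v (n-1) + s * v (n-2) + t * v (n-3))
    (hv0 : v 0 = 3) (hv1 : v 1 = r) (hv2 : v 2 = r ^ 2 + 2 * s) :
    ∀ n : ℤ, w (-n) = (2 * w (2 * n) - 2 * v n * w n + a * (v n ^ 2 - v (2 * n))) / (2 * t ^ n) := by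
  set C := companion3 r s t
  have hC : IsUnit C.det := by rw [det_companion3]; exact ht.isUnit
  have hw' : w = fun k => (C ^ k *ᵥ ![a, b, c]) 0 :=
    IsLinearRec3.eq_of_init hw (isLinearRec3_zpow_mulVec_apply hC companion3_pow_three _ _) ht
      (by simp [hw0]) (by simp [hw1, C, companion3_mulVec])
      (by simp [hw2, C, sq, ← mulVec_mulVec, companion3_mulVec])
  have hv' : v = fun k => trace (C ^ k) :=
    IsLinearRec3.eq_of_init hv (isLinearRec3_trace_zpow hC companion3_pow_three) ht
      (by simp [hv0]) (by simp [hv1, C, trace_companion3]) (by simp [hv2, C, trace_companion3_sq])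
  intro n
  have hsq : (C ^ n) ^ 2 = C ^ (2 * n) := by
    rw [Matrix.zpow_mul' _ hC, ← zpow_natCast, Nat.cast_ofNat]
  have key := cayley_hamilton_fin_three_mul_inv (C ^ n) (hC.det_zpow n)
  rw [hsq, ← zpow_neg hC, det_zpow, det_companion3] at key
  replace key := congrArg (fun X => (X *ᵥ ![a, b, c]) 0) key
  simp only [add_mulVec, sub_mulVec, smul_mulVec, one_mulVec, Pi.add_apply, Pi.sub_apply,
    Pi.smul_apply, smul_eq_mul, cons_val_zero] at key
  subst hw' hv'
  rw [eq_div_iff (mul_ne_zero two_ne_zero (zpow_ne_zero n ht))]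
  linear_combination -key
end
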